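/- arXiv:1301.7714 — 2 statements merged into one kernel-verified Lean document; each statement's English description precedes it below -/
import Mathlib

section
/- For all integers n ≥ 2 and 0 ≤ r ≤ n, one has N(n, 0, r) = 2·M(n−1, 0, r−1, r); that is, the number of ordered pairs of nonintersecting lattice paths of length n both ending at (r, n−r) is twice the number of ordered pairs of nonintersecting lattice paths of length n−1 ending at (r−1, n−r) and (r, n−r−1) respectively. -/
/-- The x-coordinate (number of East steps) of the lattice path `P` after `m` steps. -/
def latticePos {n : ℕ} (P : Fin n → Bool) (m : ℕ) : ℕ :=
  (Finset.univ.filter (fun i : Fin n => (i : ℕ) < m ∧ P i = true)).card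

/-- The number of intersections of paths `P` and `Q` (common lattice points with
coordinate sum strictly between `0` and `n`). -/
def latticeInter {n : ℕ} (P Q : Fin n → Bool) : ℕ :=
  ((Finset.Ioo 0 n).filter (fun m => latticePos P m = latticePos Q m)).card

/-- Number of ordered pairs of lattice paths of length `n`, ending at `(r, n-r)` and
`(s, n-s)` respectively, intersecting exactly `k` times (natural-number version). -/
def Mnat (n k r s : ℕ) : ℕ :=
  (Finset.univ.filter (fun PQ : (Fin n → Bool) × (Fin n → Bool) =>
      latticePos PQ.1 n = r ∧ latticePos PQ.2 n = s ∧ latticeInter PQ.1 PQ.2 = k)).card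

/-- `M n k r s`, extended by zero to integer arguments. -/
def M (n k r s : ℤ) : ℤ :=
  if 0 ≤ n ∧ 0 ≤ k ∧ 0 ≤ r ∧ 0 ≤ s then Mnat n.toNat k.toNat r.toNat s.toNat else 0

/-- `N n k r = M n k r r`. -/
def N (n k r : ℤ) : ℤ := M n k r r

/-- `NE n k p = Σ_{r+s=2p, 0 ≤ r,s ≤ n} M n k r s`. -/
noncomputable def NE (n k p : ℤ) : ℤ := ∑ r ∈ Finset.Icc (0 : ℤ) n, M n k r (2 * p - r)

/-- `NO n k p = Σ_{r+s=2p+1, 0 ≤ r,s ≤ n} M n k r s`. -/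
noncomputable def NO (n k p : ℤ) : ℤ := ∑ r ∈ Finset.Icc (0 : ℤ) n, M n k r (2 * p + 1 - r)

/-- Binomial coefficient for integer arguments (zero unless both are nonnegative). -/
def ichoose (a b : ℤ) : ℤ :=
  if 0 ≤ a ∧ 0 ≤ b then (a.toNat).choose b.toNat else 0

/-!
Two nonintersecting paths with a common endpoint must part at the first step, so by the symmetry
`(P, Q) ↦ (Q, P)` it suffices to count the pairs in which `P` starts East. Since the East-coordinate
of a path grows by at most one per step, two paths can only change their order by meeting; hence
`P` stays strictly East of `Q`, which forces `P` to end with a North step and `Q` with an East step.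
Deleting these last steps is a bijection onto the nonintersecting pairs `(Q', P')` ending at
`(r - 1, n - r)` and `(r, n - r - 1)`: conversely, in such a pair the path ending further East
must have started East.
-/

open Finset

lemma lt_of_lt_of_forall_Icc_ne {f g : ℕ → ℕ} (hf : Monotone f) (hg : ∀ k, g (k + 1) ≤ g k + 1)
    {a b : ℕ} (hab : a ≤ b) (hne : ∀ k, a ≤ k → k ≤ b → f k ≠ g k) (h : g a < f a) :
    g b < f b := by
  induction b, hab using Nat.le_induction with
  | base => exact h
  | succ b hab ih =>
    have := ih fun k hak hkb => hne k hak (by omega)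
    have := hf (Nat.le_add_right b 1)
    have := hg b
    have := hne (b + 1) (by omega) le_rfl
    omega

section
variable {m n q r s : ℕ}

lemma latticePos_zero (P : Fin n → Bool) : latticePos P 0 = 0 := by
  simp [latticePos]

lemma latticePos_mono (P : Fin n → Bool) : Monotone (latticePos P) :=
  fun _ _ hab => card_le_card fun _ => by
    simpa only [mem_filter, mem_univ, true_and] using And.imp_left (·.trans_le hab)

lemma latticePos_succ (P : Fin n → Bool) (i : Fin n) :
    latticePos P (i + 1) = latticePos P i + (P i).toNat := by
  unfold latticePos
  cases h : P i
  · rw [Bool.toNat_false, add_zero]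
    congr 1
    ext j
    simp only [mem_filter, mem_univ, true_and]
    grind
  · rw [Bool.toNat_true, ← card_insert_of_notMem (a := i) (by simp)]
    congr 1
    ext j
    simp only [mem_filter, mem_univ, true_and, mem_insert]
    grind

lemma latticePos_succ_le (P : Fin n → Bool) (k : ℕ) :
    latticePos P (k + 1) ≤ latticePos P k + 1 := by
  unfold latticePos
  set s := univ.filter fun i : Fin n => (i : ℕ) < k + 1 ∧ P i = true
  set t := univ.filter fun i : Fin n => (i : ℕ) < k ∧ P i = true
  have hnew : #(s \ t) ≤ 1 := card_le_one.mpr fun i hi j hj => by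
    simp only [s, t, mem_sdiff, mem_filter, mem_univ, true_and] at hi hj
    ext; grind
  linarith [card_le_card_sdiff_add_card (s := s) (t := t)]

lemma latticePos_one (P : Fin (m + 1) → Bool) : latticePos P 1 = (P 0).toNat := by
  simpa [latticePos_zero] using latticePos_succ P 0

lemma latticePos_snoc (A : Fin m → Bool) (b : Bool) {k : ℕ} (hk : k ≤ m) :
    latticePos (Fin.snoc A b : Fin (m + 1) → Bool) k = latticePos A k := by
  induction k with
  | zero => simp only [latticePos_zero]
  | succ k ih =>
    have hsucc := latticePos_succ (Fin.snoc A b : Fin (m + 1) → Bool) (Fin.castSucc ⟨k, hk⟩)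
    simp only [Fin.val_castSucc, Fin.snoc_castSucc] at hsucc
    rw [hsucc, ih (by omega), latticePos_succ A ⟨k, hk⟩]

lemma latticePos_snoc_last (A : Fin m → Bool) (b : Bool) :
    latticePos (Fin.snoc A b : Fin (m + 1) → Bool) (m + 1) = latticePos A m + b.toNat := by
  simpa [latticePos_snoc A b le_rfl] using latticePos_succ (Fin.snoc A b) (Fin.last m)

def nonintersectingPairs (n r s : ℕ) : Finset ((Fin n → Bool) × (Fin n → Bool)) :=
  univ.filter fun PQ =>
    latticePos PQ.1 n = r ∧ latticePos PQ.2 n = s ∧ latticeInter PQ.1 PQ.2 = 0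

lemma mem_nonintersectingPairs {P Q : Fin n → Bool} :
    (P, Q) ∈ nonintersectingPairs n r s ↔ latticePos P n = r ∧ latticePos Q n = s ∧
      ∀ k, 0 < k → k < n → latticePos P k ≠ latticePos Q k := by
  rw [nonintersectingPairs, mem_filter]
  simp [latticeInter, filter_eq_empty_iff]

lemma swap_mem_nonintersectingPairs {PQ : (Fin n → Bool) × (Fin n → Bool)}
    (h : PQ ∈ nonintersectingPairs n r s) : PQ.swap ∈ nonintersectingPairs n s r := by
  obtain ⟨P, Q⟩ := PQ
  obtain ⟨hP, hQ, hne⟩ := mem_nonintersectingPairs.1 h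
  exact mem_nonintersectingPairs.2 ⟨hQ, hP, fun k hk hkn => (hne k hk hkn).symm⟩

lemma latticePos_ne_of_mem_nonintersectingPairs {P Q : Fin n → Bool}
    (h : (P, Q) ∈ nonintersectingPairs n r s) (hrs : r ≠ s) :
    ∀ k, 0 < k → k ≤ n → latticePos P k ≠ latticePos Q k := by
  obtain ⟨hP, hQ, hne⟩ := mem_nonintersectingPairs.1 h
  intro k hk hkn
  rcases hkn.lt_or_eq with hkn | rfl
  · exact hne k hk hkn
  · rwa [hP, hQ]


lemma head_ne_of_mem_nonintersectingPairs {P Q : Fin (m + 2) → Bool}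
    (h : (P, Q) ∈ nonintersectingPairs (m + 2) r s) : P 0 ≠ Q 0 := by
  have hne := (mem_nonintersectingPairs.1 h).2.2 1 one_pos (by omega)
  rw [latticePos_one, latticePos_one] at hne
  exact fun heq => hne (heq ▸ rfl)

lemma nonintersectingPairs_zero_zero : nonintersectingPairs (m + 2) 0 0 = ∅ := by
  refine eq_empty_of_forall_notMem fun ⟨P, Q⟩ h => head_ne_of_mem_nonintersectingPairs h ?_
  obtain ⟨hP, hQ, -⟩ := mem_nonintersectingPairs.1 h
  have hP1 := latticePos_mono P (show 1 ≤ m + 2 by omega)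
  have hQ1 := latticePos_mono Q (show 1 ≤ m + 2 by omega)
  rw [latticePos_one] at hP1 hQ1
  cases hP0 : P 0 <;> cases hQ0 : Q 0 <;> simp_all

lemma card_nonintersectingPairs_eq_two_mul :
    #(nonintersectingPairs (m + 2) r r) =
      2 * #{PQ ∈ nonintersectingPairs (m + 2) r r | PQ.1 0 = true} := by
  rw [← card_filter_add_card_filter_not (fun PQ => PQ.1 0 = true), two_mul]
  congr 1
  refine card_nbij' Prod.swap Prod.swap ?_ ?_ (fun _ _ => rfl) (fun _ _ => rfl) <;>
  · rintro ⟨P, Q⟩ hPQ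
    simp only [coe_filter, Set.mem_ofPred_eq] at hPQ ⊢
    have := head_ne_of_mem_nonintersectingPairs hPQ.1
    exact ⟨swap_mem_nonintersectingPairs hPQ.1, by simp_all⟩


lemma snoc_mem_nonintersectingPairs_iff {A B : Fin (m + 1) → Bool} {a b : Bool} :
    (Fin.snoc A a, Fin.snoc B b) ∈ nonintersectingPairs (m + 2) r s ↔
      latticePos A (m + 1) + a.toNat = r ∧ latticePos B (m + 1) + b.toNat = s ∧
        ∀ k, 0 < k → k ≤ m + 1 → latticePos A k ≠ latticePos B k := by
  rw [mem_nonintersectingPairs, latticePos_snoc_last, latticePos_snoc_last]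
  refine and_congr_right fun _ => and_congr_right fun _ => forall_congr' fun k => ?_
  refine ⟨fun h hk hkm => ?_, fun h hk hkm => ?_⟩
  · simpa [latticePos_snoc _ _ hkm] using h hk (by omega)
  · simpa [latticePos_snoc _ _ (Nat.le_of_lt_succ hkm)] using h hk (by omega)

lemma head_eq_true_of_mem_nonintersectingPairs {A B : Fin (m + 1) → Bool}
    (h : (A, B) ∈ nonintersectingPairs (m + 1) q (q + 1)) : B 0 = true := by
  have hne := latticePos_ne_of_mem_nonintersectingPairs h (by omega)
  obtain ⟨hA, hB, -⟩ := mem_nonintersectingPairs.1 h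
  by_contra hB0
  have h1 : latticePos B 1 < latticePos A 1 := by
    have := hne 1 one_pos (by omega)
    simp only [latticePos_one] at this ⊢
    cases hA0 : A 0 <;> simp_all
  have := lt_of_lt_of_forall_Icc_ne (latticePos_mono A) (latticePos_succ_le B)
    (show 1 ≤ m + 1 by omega) hne h1
  omega

lemma last_eq_of_snoc_mem_nonintersectingPairs {A B : Fin (m + 1) → Bool} {a b : Bool}
    (h : (Fin.snoc A a, Fin.snoc B b) ∈ nonintersectingPairs (m + 2) (q + 1) (q + 1))
    (hA : A 0 = true) :
    a = false ∧ b = true ∧ (B, A) ∈ nonintersectingPairs (m + 1) q (q + 1) := by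
  have hB : B 0 = false := by
    simpa [hA] using (head_ne_of_mem_nonintersectingPairs h).symm
  obtain ⟨hAa, hBb, hne⟩ := snoc_mem_nonintersectingPairs_iff.1 h
  have hlt : latticePos B (m + 1) < latticePos A (m + 1) :=
    lt_of_lt_of_forall_Icc_ne (latticePos_mono A) (latticePos_succ_le B) (show 1 ≤ m + 1 by omega)
      hne (by simp [latticePos_one, hA, hB])
  have ha := Bool.toNat_le a
  have hb := Bool.toNat_le b
  have hAq : latticePos A (m + 1) = q + 1 := by omega
  have hBq : latticePos B (m + 1) = q := by omega
  refine ⟨?_, ?_, mem_nonintersectingPairs.2 ⟨hBq, hAq, fun k hk hkm => (hne k hk hkm.le).symm⟩⟩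
  · cases a <;> simp_all
  · cases b <;> simp_all

lemma card_filter_head_nonintersectingPairs :
    #{PQ ∈ nonintersectingPairs (m + 2) (q + 1) (q + 1) | PQ.1 0 = true} =
      #(nonintersectingPairs (m + 1) q (q + 1)) := by
  refine card_nbij' (fun PQ => (Fin.init PQ.2, Fin.init PQ.1))
    (fun AB => (Fin.snoc AB.2 false, Fin.snoc AB.1 true)) ?_ ?_ ?_ ?_
  · rintro ⟨P, Q⟩ hPQ
    rw [coe_filter, Set.mem_ofPred_eq] at hPQ
    rw [← Fin.snoc_init_self P, ← Fin.snoc_init_self Q] at hPQ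
    exact (last_eq_of_snoc_mem_nonintersectingPairs hPQ.1 (by simpa using hPQ.2)).2.2
  · rintro ⟨A, B⟩ hAB
    have hne := latticePos_ne_of_mem_nonintersectingPairs hAB (by omega)
    obtain ⟨hA, hB, -⟩ := mem_nonintersectingPairs.1 hAB
    rw [coe_filter, Set.mem_ofPred_eq]
    refine ⟨snoc_mem_nonintersectingPairs_iff.2 ⟨by simp [hB], by simp [hA],
      fun k hk hkm => (hne k hk hkm).symm⟩, ?_⟩
    simpa using head_eq_true_of_mem_nonintersectingPairs hAB
  · rintro ⟨P, Q⟩ hPQ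
    rw [coe_filter, Set.mem_ofPred_eq] at hPQ
    rw [← Fin.snoc_init_self P, ← Fin.snoc_init_self Q] at hPQ ⊢
    obtain ⟨ha, hb, -⟩ := last_eq_of_snoc_mem_nonintersectingPairs hPQ.1 (by simpa using hPQ.2)
    simp [ha, hb]
  · rintro ⟨A, B⟩ -
    simp

end

lemma M_natCast_zero_eq_card (n r s : ℕ) : M n 0 r s = #(nonintersectingPairs n r s) := by
  simp [M, Mnat, nonintersectingPairs]

theorem N_zero_eq_twice_M_general (n r : ℤ) (hn : 2 ≤ n) (hr : 0 ≤ r) :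
    N n 0 r = 2 * M (n - 1) 0 (r - 1) r := by
  lift n to ℕ using (by omega)
  lift r to ℕ using hr
  obtain ⟨m, rfl⟩ : ∃ m, n = m + 2 := ⟨n - 2, by omega⟩
  rw [N, M_natCast_zero_eq_card, show ((m + 2 : ℕ) : ℤ) - 1 = (m + 1 : ℕ) by push_cast; ring]
  rcases r with _ | q
  · simp [M, nonintersectingPairs_zero_zero]
  · rw [show ((q + 1 : ℕ) : ℤ) - 1 = q by push_cast; ring, M_natCast_zero_eq_card,
      card_nonintersectingPairs_eq_two_mul, card_filter_head_nonintersectingPairs]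
    norm_cast

/-- `N(n, 0, r) = 2 · M(n−1, 0, r−1, r)`. -/
theorem N_zero_eq_twice_M (n r : ℤ) (hn : 2 ≤ n) (hr : 0 ≤ r) (hrn : r ≤ n) :
    N n 0 r = 2 * M (n - 1) 0 (r - 1) r :=
  N_zero_eq_twice_M_general n r hn hr
end

section
/- For all integers n ≥ 2, 0 ≤ k ≤ n−2, and r, s with 0 ≤ r, r < s−1, s ≤ n, one has M(n,k,r,s) = M(n−1,k,r,s) + M(n−1,k,r−1,s) + M(n−1,k,r,s−1) + M(n−1,k,r−1,s−1). -/
lemma latticePos_of_le {m j : ℕ} (P : Fin m → Bool) (hj : m ≤ j) :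
    latticePos P j = latticePos P m := by
  unfold latticePos
  congr 1
  refine Finset.filter_congr fun i _ => ?_
  have := i.isLt
  constructor <;> rintro ⟨-, h⟩ <;> exact ⟨by omega, h⟩

lemma latticePos_snoc_s7 {m : ℕ} (P : Fin m → Bool) (b : Bool) (j : ℕ) :
    latticePos (Fin.snoc P b : Fin (m + 1) → Bool) j =
      latticePos P j + if m < j ∧ b = true then 1 else 0 := by
  simp only [latticePos, Finset.card_filter]
  rw [Fin.sum_univ_castSucc]
  simp [Fin.snoc_castSucc, Fin.snoc_last]

lemma latticePos_snoc_self {m : ℕ} (P : Fin m → Bool) (b : Bool) :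
    latticePos (Fin.snoc P b : Fin (m + 1) → Bool) (m + 1) = latticePos P m + b.toNat := by
  rw [latticePos_snoc_s7, latticePos_of_le P m.le_succ]
  cases b <;> simp

lemma latticeInter_snoc {m : ℕ} (P Q : Fin m → Bool) (b c : Bool)
    (h : latticePos P m ≠ latticePos Q m) :
    latticeInter (Fin.snoc P b : Fin (m + 1) → Bool) (Fin.snoc Q c) = latticeInter P Q := by
  unfold latticeInter
  congr 1
  ext j
  simp only [Finset.mem_filter, Finset.mem_Ioo, latticePos_snoc_s7]
  by_cases hjm : m < j
  · simp only [hjm, true_and]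
    omega
  · simp only [hjm, false_and, if_false, add_zero]
    constructor
    · rintro ⟨⟨h0, hj⟩, he⟩
      refine ⟨⟨h0, lt_of_le_of_ne (by omega) ?_⟩, he⟩
      rintro rfl
      exact h he
    · rintro ⟨⟨h0, hj⟩, he⟩
      exact ⟨⟨h0, by omega⟩, he⟩

lemma sum_tuples_succ {m : ℕ} {α β : Type*} [Fintype α] [AddCommMonoid β]
    (f : (Fin (m + 1) → α) → β) :
    ∑ P, f P = ∑ a, ∑ P : Fin m → α, f (Fin.snoc P a) := by
  rw [← (Fin.snocEquiv fun _ => α).sum_comp, Fintype.sum_prod_type]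
  rfl

lemma M_natCast (n k : ℕ) (r s : ℤ) :
    M n k r s = ∑ P : Fin n → Bool, ∑ Q : Fin n → Bool,
      if (latticePos P n : ℤ) = r ∧ (latticePos Q n : ℤ) = s ∧ latticeInter P Q = k
      then 1 else 0 := by
  unfold M
  split_ifs with h
  · obtain ⟨-, -, hr, hs⟩ := h
    lift r to ℕ using hr
    lift s to ℕ using hs
    simp only [Mnat, Int.toNat_natCast, Finset.card_filter, Fintype.sum_prod_type, Nat.cast_inj]
    push_cast
    rfl
  · refine (Finset.sum_eq_zero fun P _ => Finset.sum_eq_zero fun Q _ => if_neg ?_).symm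
    rintro ⟨rfl, rfl, -⟩
    exact h ⟨by positivity, by positivity, by positivity, by positivity⟩

lemma snoc_endpoint_inter_iff {m k : ℕ} {r s : ℤ} (hrs : r < s - 1) (P Q : Fin m → Bool)
    (b c : Bool) :
    ((latticePos (Fin.snoc P b : Fin (m + 1) → Bool) (m + 1) : ℤ) = r ∧
        (latticePos (Fin.snoc Q c : Fin (m + 1) → Bool) (m + 1) : ℤ) = s ∧
        latticeInter (Fin.snoc P b : Fin (m + 1) → Bool) (Fin.snoc Q c) = k) ↔
      ((latticePos P m : ℤ) = r - b.toNat ∧ (latticePos Q m : ℤ) = s - c.toNat ∧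
        latticeInter P Q = k) := by
  rw [latticePos_snoc_self, latticePos_snoc_self]
  push_cast
  have hb := Bool.toNat_le b
  have hc := Bool.toNat_le c
  -- the endpoints after `m` steps are `r - b ≤ r` and `s - c ≥ s - 1 > r`
  have hinter : (latticePos P m : ℤ) + b.toNat = r → (latticePos Q m : ℤ) + c.toNat = s →
      latticeInter (Fin.snoc P b : Fin (m + 1) → Bool) (Fin.snoc Q c) = latticeInter P Q :=
    fun h1 h2 => latticeInter_snoc P Q b c (by omega)
  constructor
  · rintro ⟨h1, h2, h3⟩
    exact ⟨by omega, by omega, (hinter h1 h2).symm.trans h3⟩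
  · rintro ⟨h1, h2, h3⟩
    exact ⟨by omega, by omega, (hinter (by omega) (by omega)).trans h3⟩

lemma M_succ_eq_sum (m k : ℕ) {r s : ℤ} (hrs : r < s - 1) :
    M (m + 1) k r s = ∑ b : Bool, ∑ c : Bool, M m k (r - b.toNat) (s - c.toNat) := by
  rw [← Nat.cast_succ, M_natCast, sum_tuples_succ]
  simp only [M_natCast]
  refine Finset.sum_congr rfl fun b _ => ?_
  simp only [sum_tuples_succ (fun Q => ite _ _ _), snoc_endpoint_inter_iff hrs]
  exact Finset.sum_comm

theorem M_recurrence_far_general (n k r s : ℤ) (hn : 2 ≤ n) (hk : 0 ≤ k) (hrs : r < s - 1) :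
    M n k r s =
      M (n - 1) k r s + M (n - 1) k (r - 1) s + M (n - 1) k r (s - 1) +
        M (n - 1) k (r - 1) (s - 1) := by
  obtain ⟨m, rfl⟩ : ∃ m : ℕ, n = m + 1 := ⟨(n - 1).toNat, by omega⟩
  lift k to ℕ using hk
  rw [M_succ_eq_sum m k hrs]
  simp only [Fintype.sum_bool, Bool.toNat_true, Bool.toNat_false, Nat.cast_one, Nat.cast_zero,
    sub_zero, add_sub_cancel_right]
  ring

/-- The recurrence for `M(n,k,r,s)` when `r < s − 1`. -/
theorem M_recurrence_far (n k r s : ℤ) (hn : 2 ≤ n) (hk : 0 ≤ k) (hkn : k ≤ n - 2)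
    (hr : 0 ≤ r) (hrs : r < s - 1) (hs : s ≤ n) :
    M n k r s =
      M (n - 1) k r s + M (n - 1) k (r - 1) s + M (n - 1) k r (s - 1) +
        M (n - 1) k (r - 1) (s - 1) :=
  M_recurrence_far_general n k r s hn hk hrs
end
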